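/- arXiv:0910.5228 — 2 statements merged into one kernel-verified Lean document; each statement's English description precedes it below -/
import Mathlib

section
/- For every complex number z and real numbers a > 0 and b, the integral 4∫₀^∞ cos(2zu)·exp(2bu − a·exp(2u)) du converges and equals Γ(b+iz, a)/a^{b+iz} + Γ(b−iz, a)/a^{b−iz}, where Γ(s, a) = ∫ₐ^∞ e^{−t} t^{s−1} dt denotes the upper incomplete gamma function. -/
open MeasureTheory Complex

noncomputable def incGamma (s : ℂ) (a : ℝ) : ℂ :=
  ∫ t in Set.Ioi a, Real.exp (-t) * (t : ℂ) ^ (s - 1)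

/-!
Under the substitution `t = a e^{2u}`, which maps `(0, ∞)` onto `(a, ∞)`, the integrand
`e^{2su - a e^{2u}}` becomes `a^{-s} e^{-t} t^{s-1} / 2`; since `a > 0`, the incomplete gamma
integrand is integrable near `∞` for every `s`, with no condition at `t = 0`. Writing `cos (2zu)`
as the average of `e^{±2izu}` splits the integral into two such pieces, with `s = b ± iz`.
-/

open Set

section ExpSubstitution

variable {E : Type*} [NormedAddCommGroup E] [NormedSpace ℝ E] {a : ℝ}

lemma image_Ioi_zero_mul_exp_two_mul (ha : 0 < a) :
    (fun u : ℝ => a * Real.exp (2 * u)) '' Ioi 0 = Ioi a := by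
  have : (fun u : ℝ => a * Real.exp (2 * u)) = (a * ·) ∘ Real.exp ∘ (2 * ·) := rfl
  rw [this, image_comp, image_comp, image_mul_left_Ioi two_pos, mul_zero, Real.image_exp_Ioi,
    Real.exp_zero, image_mul_left_Ioi ha, mul_one]

lemma hasDerivAt_mul_exp_two_mul (a u : ℝ) :
    HasDerivAt (fun u : ℝ => a * Real.exp (2 * u)) (2 * a * Real.exp (2 * u)) u := by
  have h := (((hasDerivAt_id' u).const_mul 2).exp).const_mul a
  exact h.congr_deriv (by ring)

lemma monotone_mul_exp_two_mul (ha : 0 ≤ a) : Monotone (fun u : ℝ => a * Real.exp (2 * u)) :=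
  fun _ _ h => mul_le_mul_of_nonneg_left (Real.exp_monotone (by linarith)) ha

lemma integrableOn_Ioi_iff_comp_mul_exp_two_mul (ha : 0 < a) (g : ℝ → E) :
    IntegrableOn g (Ioi a) ↔
      IntegrableOn (fun u => (2 * a * Real.exp (2 * u)) • g (a * Real.exp (2 * u))) (Ioi 0) := by
  rw [← image_Ioi_zero_mul_exp_two_mul ha]
  exact integrableOn_image_iff_integrableOn_deriv_smul_of_monotoneOn measurableSet_Ioi
    (fun u _ => (hasDerivAt_mul_exp_two_mul a u).hasDerivWithinAt)
    ((monotone_mul_exp_two_mul ha.le).monotoneOn _) g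

lemma integral_Ioi_eq_integral_comp_mul_exp_two_mul (ha : 0 < a) (g : ℝ → E) :
    ∫ t in Ioi a, g t =
      ∫ u in Ioi 0, (2 * a * Real.exp (2 * u)) • g (a * Real.exp (2 * u)) := by
  rw [← image_Ioi_zero_mul_exp_two_mul ha]
  exact integral_image_eq_integral_deriv_smul_of_monotoneOn measurableSet_Ioi
    (fun u _ => (hasDerivAt_mul_exp_two_mul a u).hasDerivWithinAt)
    ((monotone_mul_exp_two_mul ha.le).monotoneOn _) g

end ExpSubstitution

lemma ofReal_exp_cpow (t : ℝ) (w : ℂ) : ((Real.exp t : ℝ) : ℂ) ^ w = Complex.exp (t * w) := by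
  rw [cpow_def_of_ne_zero (ofReal_ne_zero.2 (Real.exp_ne_zero t)),
    ← ofReal_log (Real.exp_pos t).le, Real.log_exp]

section IncGammaSubstitution

variable {a : ℝ}

lemma integrableOn_incGamma_integrand (s : ℂ) (ha : 0 < a) :
    IntegrableOn (fun t : ℝ => (Real.exp (-t) : ℂ) * (t : ℂ) ^ (s - 1)) (Ioi a) := by
  have hreal : IntegrableOn (fun t : ℝ => Real.exp (-t) * t ^ (s.re - 1)) (Ioi a) :=
    integrable_of_isBigO_exp_neg one_half_pos
      (continuousOn_id.neg.rexp.mul (continuousOn_id.rpow_const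
        fun t ht => Or.inl (ha.trans_le ht).ne'))
      (Real.Gamma_integrand_isLittleO _).isBigO
  refine Integrable.congr' hreal ?_ ?_
  · refine ContinuousOn.aestronglyMeasurable ?_ measurableSet_Ioi
    refine (continuous_ofReal.comp continuous_neg.rexp).continuousOn.mul ?_
    exact fun t ht => (continuousAt_cpow_const (ofReal_mem_slitPlane.2 (ha.trans ht))).comp
      continuous_ofReal.continuousAt |>.continuousWithinAt
  · filter_upwards [ae_restrict_mem measurableSet_Ioi] with t ht
    rw [norm_mul, norm_mul, Complex.norm_real, norm_cpow_eq_rpow_re_of_pos (ha.trans ht),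
      Real.norm_of_nonneg (Real.rpow_nonneg (ha.trans ht).le _)]
    simp

lemma deriv_smul_incGamma_integrand (s : ℂ) (ha : 0 < a) (u : ℝ) :
    (2 * a * Real.exp (2 * u)) •
        ((Real.exp (-(a * Real.exp (2 * u))) : ℂ) * ((a * Real.exp (2 * u) : ℝ) : ℂ) ^ (s - 1)) =
      2 * (a : ℂ) ^ s * Complex.exp (2 * s * u - (a * Real.exp (2 * u) : ℝ)) := by
  have ha' : (a : ℂ) ≠ 0 := ofReal_ne_zero.2 ha.ne'
  have hpow : ((a * Real.exp (2 * u) : ℝ) : ℂ) ^ (s - 1) =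
      (a : ℂ) ^ (s - 1) * Complex.exp ((2 * u : ℝ) * (s - 1)) := by
    rw [ofReal_mul, mul_cpow_ofReal_nonneg ha.le (Real.exp_pos _).le, ofReal_exp_cpow]
  have hsplit : Complex.exp (2 * s * u - (a * Real.exp (2 * u) : ℝ)) =
      Complex.exp (2 * u) * Complex.exp (-(a * Real.exp (2 * u) : ℝ)) *
        Complex.exp ((2 * u : ℝ) * (s - 1)) := by
    rw [← Complex.exp_add, ← Complex.exp_add]; push_cast; ring_nf
  rw [real_smul, hpow, hsplit, cpow_sub _ _ ha', cpow_one]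
  push_cast
  field_simp

lemma integrableOn_exp_two_mul_sub_mul_exp (s : ℂ) (ha : 0 < a) :
    IntegrableOn (fun u : ℝ => Complex.exp (2 * s * u - (a * Real.exp (2 * u) : ℝ))) (Ioi 0) := by
  have h := (integrableOn_Ioi_iff_comp_mul_exp_two_mul ha _).1
    (integrableOn_incGamma_integrand s ha)
  simp only [deriv_smul_incGamma_integrand s ha] at h
  exact (integrable_const_mul_iff (IsUnit.mk0 _ (by simp [ha.ne'])) _).1 h

lemma incGamma_div_cpow_eq_two_mul_integral (s : ℂ) (ha : 0 < a) :
    incGamma s a / (a : ℂ) ^ s =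
      2 * ∫ u in Ioi 0, Complex.exp (2 * s * u - (a * Real.exp (2 * u) : ℝ)) := by
  have hpow : (a : ℂ) ^ s ≠ 0 := cpow_ne_zero_iff.2 (Or.inl (ofReal_ne_zero.2 ha.ne'))
  rw [div_eq_iff hpow, incGamma, integral_Ioi_eq_integral_comp_mul_exp_two_mul ha]
  simp only [deriv_smul_incGamma_integrand s ha, integral_const_mul]
  ring

end IncGammaSubstitution

lemma cos_mul_exp_eq_exp_add_exp_div_two (z : ℂ) (b c u : ℝ) :
    Complex.cos (2 * z * u) * Real.exp (2 * b * u - c) =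
      (Complex.exp (2 * (b + I * z) * u - c) + Complex.exp (2 * (b - I * z) * u - c)) / 2 := by
  rw [Complex.cos, ofReal_exp, div_mul_eq_mul_div, add_mul, ← Complex.exp_add, ← Complex.exp_add]
  congr 2 <;> push_cast <;> ring_nf

theorem stmt_0 (z : ℂ) (a b : ℝ) (ha : 0 < a) :
    IntegrableOn
      (fun u : ℝ => Complex.cos (2 * z * u) * Real.exp (2 * b * u - a * Real.exp (2 * u)))
      (Set.Ioi 0) ∧
    4 * ∫ u in Set.Ioi (0 : ℝ),
        Complex.cos (2 * z * u) * Real.exp (2 * b * u - a * Real.exp (2 * u)) =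
      incGamma ((b : ℂ) + Complex.I * z) a / (a : ℂ) ^ ((b : ℂ) + Complex.I * z) +
      incGamma ((b : ℂ) - Complex.I * z) a / (a : ℂ) ^ ((b : ℂ) - Complex.I * z) := by
  simp only [cos_mul_exp_eq_exp_add_exp_div_two]
  have hplus := integrableOn_exp_two_mul_sub_mul_exp ((b : ℂ) + I * z) ha
  have hminus := integrableOn_exp_two_mul_sub_mul_exp ((b : ℂ) - I * z) ha
  refine ⟨(hplus.add hminus).div_const 2, ?_⟩
  rw [integral_div, integral_add hplus hminus, incGamma_div_cpow_eq_two_mul_integral _ ha,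
    incGamma_div_cpow_eq_two_mul_integral _ ha]
  ring
end

section
/- Define c(n) = (4n⁴π²(n²π − 9/4) − 6n²π(n²π − 5/4)) / exp(n²π) for positive integers n. Then c(1) < 0 and c(n) > 0 for all n ≥ 2. -/
/-!
With `t = n²π`, the numerator of `c(n)` factors as `t ((t - 3)(4t - 3) - 3/2)`. Since
`3 < π < 3.15`, the bracket is negative at `t = π`, whereas it is positive as soon as `t ≥ 4`.
-/

open Real

/-- The coefficient of `1/x²` in the asymptotic expansion of `Φₙ(x)`. -/
noncomputable def phiCoeff (n : ℕ) : ℝ :=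
  (4 * n ^ 4 * π ^ 2 * (n ^ 2 * π - 9 / 4) - 6 * n ^ 2 * π * (n ^ 2 * π - 5 / 4)) /
    Real.exp (n ^ 2 * π)

noncomputable def phiCoeffNumerator (t : ℝ) : ℝ :=
  t * ((t - 3) * (4 * t - 3) - 3 / 2)

lemma phiCoeff_eq_numerator_div_exp (n : ℕ) :
    phiCoeff n = phiCoeffNumerator (n ^ 2 * π) / exp (n ^ 2 * π) := by
  unfold phiCoeff phiCoeffNumerator
  ring_nf

lemma phiCoeffNumerator_neg {t : ℝ} (h₁ : 3 < t) (h₂ : t < 3.15) : phiCoeffNumerator t < 0 := by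
  unfold phiCoeffNumerator
  have hbracket : (t - 3) * (4 * t - 3) < 3 / 2 := by nlinarith
  nlinarith

lemma phiCoeffNumerator_pos {t : ℝ} (ht : 4 ≤ t) : 0 < phiCoeffNumerator t := by
  unfold phiCoeffNumerator
  have hbracket : 13 ≤ (t - 3) * (4 * t - 3) := by nlinarith
  nlinarith

theorem stmt_6 : phiCoeff 1 < 0 ∧ ∀ n : ℕ, 2 ≤ n → 0 < phiCoeff n := by
  constructor
  · rw [phiCoeff_eq_numerator_div_exp]
    refine div_neg_of_neg_of_pos (phiCoeffNumerator_neg ?_ ?_) (exp_pos _)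
    · simpa using pi_gt_three
    · simpa using pi_lt_d2
  · intro n hn
    rw [phiCoeff_eq_numerator_div_exp]
    refine div_pos (phiCoeffNumerator_pos ?_) (exp_pos _)
    have hn2 : (4 : ℝ) ≤ (n : ℝ) ^ 2 := by
      have : (2 : ℝ) ≤ n := by exact_mod_cast hn
      nlinarith
    nlinarith [pi_gt_three]
end
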